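/- arXiv:1909.00309 — 4 statements merged into one kernel-verified Lean document; each statement's English description precedes it below -/
import Mathlib

section
/- Gowers–Cauchy–Schwarz for multilinear averages: Let X₁,…,X_s be finite nonempty sets, f : X₁×⋯×X_s → ℂ, and for each i ∈ [s] let g_i : X₁×⋯×X_s → ℂ be 1-bounded with g_i(x₁,…,x_s) independent of the i-th coordinate x_i. Then |𝔼_{x₁∈X₁,…,x_s∈X_s} f(x₁,…,x_s) ∏_{i=1}^s g_i(x₁,…,x_s)|^{2^s} ≤ 𝔼_{x_i^0, x_i^1 ∈ X_i for i=1,…,s} ∏_{ω∈{0,1}^s} C^{|ω|} f(x₁^{ω₁},…,x_s^{ω_s}), where C denotes complex conjugation and |ω| = ω₁+⋯+ω_s. -/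
open scoped BigOperators

/-- `C^n z`: apply complex conjugation `n` times. -/
noncomputable def conjPow (n : ℕ) (z : ℂ) : ℂ := if Even n then z else (starRingEnd ℂ) z

/-!
For `S ⊆ [s]` let `□_S F (x₀, x₁) = ∏_{T ⊆ S} C^{|T|} F(x^T)`, where `x^T` takes its coordinates
in `T` from `x₁` and the others from `x₀`. For `κ ∉ S`, the product `□_{S ∪ {κ}} F` at
`(x₀[κ ↦ y], x₁[κ ↦ y'])` splits as `□_S F (x₀[κ ↦ y], x₁)` times the conjugate of
`□_S F (x₀[κ ↦ y'], x₁)`, so `𝔼 □_{S ∪ {κ}} F = 𝔼 |𝔼_y □_S F (x₀[κ ↦ y], x₁)|²` is real and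
nonnegative. If `G` is 1-bounded and ignores the coordinate `κ`, then so is `□_S G`, and averaging
over `x₀ κ` followed by Cauchy–Schwarz gives `|𝔼 □_S (F G)|² ≤ 𝔼 □_{S ∪ {κ}} F`. Starting from
`S = ∅` and `F = f ∏ᵢ gᵢ` and absorbing one `g_κ` per step, after `s` steps we reach `S = [s]`.
-/

open Finset Function

lemma conjPow_zero (z : ℂ) : conjPow 0 z = z := by simp [conjPow]

lemma conjPow_succ (n : ℕ) (z : ℂ) : conjPow (n + 1) z = starRingEnd ℂ (conjPow n z) := by
  by_cases hn : Even n <;> simp [conjPow, hn, Nat.even_add_one]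

lemma conjPow_mul (n : ℕ) (z w : ℂ) : conjPow n (z * w) = conjPow n z * conjPow n w := by
  unfold conjPow; split <;> simp

lemma norm_conjPow (n : ℕ) (z : ℂ) : ‖conjPow n z‖ = ‖z‖ := by
  unfold conjPow; split <;> simp

lemma sq_expect_le_expect_sq {ι R : Type*} [CommSemiring R] [LinearOrder R] [IsStrictOrderedRing R]
    [ExistsAddOfLE R] [Module ℚ≥0 R] [PosSMulMono ℚ≥0 R] (s : Finset ι) (f : ι → R) :
    (𝔼 i ∈ s, f i) ^ 2 ≤ 𝔼 i ∈ s, f i ^ 2 := by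
  rcases s.eq_empty_or_nonempty with rfl | hs
  · simp
  · simpa [expect_const hs] using expect_mul_sq_le_sq_mul_sq s f 1

section Mix

variable {ι : Type*} [DecidableEq ι] {X : ι → Type*}

def mix (T : Finset ι) (x₀ x₁ : ∀ i, X i) : ∀ i, X i := fun i => if i ∈ T then x₁ i else x₀ i

variable {T : Finset ι} {κ : ι} (x₀ x₁ : ∀ i, X i)

@[simp] lemma mix_empty : mix ∅ x₀ x₁ = x₀ := by ext; simp [mix]

lemma mix_update_left (hκ : κ ∉ T) (y : X κ) :
    mix T (update x₀ κ y) x₁ = update (mix T x₀ x₁) κ y := by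
  ext i
  rcases eq_or_ne i κ with rfl | hi <;> simp [mix, *]

lemma mix_update_right (hκ : κ ∉ T) (y : X κ) : mix T x₀ (update x₁ κ y) = mix T x₀ x₁ := by
  ext i
  rcases eq_or_ne i κ with rfl | hi <;> simp [mix, *]

lemma mix_insert_update (hκ : κ ∉ T) (y y' : X κ) :
    mix (insert κ T) (update x₀ κ y) (update x₁ κ y') = mix T (update x₀ κ y') x₁ := by
  ext i
  rcases eq_or_ne i κ with rfl | hi <;> simp [mix, *]

end Mix

section BoxProduct

variable {ι : Type*} [DecidableEq ι] {X : ι → Type*}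

noncomputable def boxProd (S : Finset ι) (F : (∀ i, X i) → ℂ) (x₀ x₁ : ∀ i, X i) : ℂ :=
  ∏ T ∈ S.powerset, conjPow #T (F (mix T x₀ x₁))

variable {S : Finset ι} {κ : ι} (F G : (∀ i, X i) → ℂ) (x₀ x₁ : ∀ i, X i)

@[simp] lemma boxProd_empty : boxProd ∅ F x₀ x₁ = F x₀ := by
  simp [boxProd, conjPow_zero]

lemma boxProd_mul :
    boxProd S (fun x => F x * G x) x₀ x₁ = boxProd S F x₀ x₁ * boxProd S G x₀ x₁ := by
  simp only [boxProd, conjPow_mul, prod_mul_distrib]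

lemma norm_boxProd_le_one (hG : ∀ x, ‖G x‖ ≤ 1) : ‖boxProd S G x₀ x₁‖ ≤ 1 := by
  rw [boxProd, norm_prod]
  exact prod_le_one (fun _ _ => norm_nonneg _) fun T _ => (norm_conjPow _ _).trans_le (hG _)

lemma boxProd_update_left (hκ : κ ∉ S) (hG : ∀ x y, G (update x κ y) = G x) (y : X κ) :
    boxProd S G (update x₀ κ y) x₁ = boxProd S G x₀ x₁ := by
  refine prod_congr rfl fun T hT => ?_
  rw [mix_update_left _ _ (fun h => hκ (mem_powerset.1 hT h)), hG]

lemma boxProd_insert_update (hκ : κ ∉ S) (y y' : X κ) :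
    boxProd (insert κ S) F (update x₀ κ y) (update x₁ κ y') =
      boxProd S F (update x₀ κ y) x₁ * starRingEnd ℂ (boxProd S F (update x₀ κ y') x₁) := by
  rw [boxProd, prod_powerset_insert hκ, boxProd, boxProd, map_prod]
  congr 1 <;> refine prod_congr rfl fun T hT => ?_ <;>
    have hκT : κ ∉ T := fun h => hκ (mem_powerset.1 hT h)
  · rw [mix_update_right _ _ hκT]
  · rw [card_insert_of_notMem hκT, conjPow_succ, mix_insert_update _ _ hκT]

lemma prod_conjPow_eq_boxProd_univ [Fintype ι] (F : (∀ i, X i) → ℂ) (x₀ x₁ : ∀ i, X i) :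
    ∏ ω : ι → Bool, conjPow (∑ i, if ω i then 1 else 0) (F fun i => if ω i then x₁ i else x₀ i) =
      boxProd univ F x₀ x₁ := by
  rw [boxProd, powerset_univ]
  let e : (ι → Bool) ≃ Finset ι :=
    ⟨fun ω => ({i | ω i} : Finset ι), fun T i => i ∈ T,
      fun ω => by ext; simp, fun T => by ext; simp⟩
  refine Fintype.prod_equiv e _ _ fun ω => ?_
  simp only [e, Equiv.coe_fn_mk, sum_boole, Nat.cast_id]
  congr
  ext i
  simp [mix]

end BoxProduct

section BoxAverage

variable {ι : Type*} [Fintype ι] [DecidableEq ι] {X : ι → Type*} [∀ i, Fintype (X i)]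

lemma expect_expect_update {M : Type*} [AddCommMonoid M] [Module ℚ≥0 M]
    (φ : (∀ i, X i) → M) (κ : ι) : 𝔼 x, 𝔼 y, φ (update x κ y) = 𝔼 x, φ x := by
  cases isEmpty_or_nonempty (∀ i, X i)
  · simp [expect_univ]
  have : Nonempty (X κ) := ⟨(Classical.arbitrary (∀ i, X i)) κ⟩
  let e : (∀ i, X i) × X κ ≃ (∀ i, X i) × X κ :=
    { toFun := fun p => (update p.1 κ p.2, p.1 κ)
      invFun := fun p => (update p.1 κ p.2, p.1 κ)
      left_inv := fun p => by simp
      right_inv := fun p => by simp }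
  calc 𝔼 x, 𝔼 y, φ (update x κ y) = 𝔼 p : (∀ i, X i) × X κ, φ (update p.1 κ p.2) := by
        rw [← univ_product_univ, expect_product]
    _ = 𝔼 p : (∀ i, X i) × X κ, φ p.1 := Fintype.expect_equiv e _ _ fun _ => rfl
    _ = 𝔼 x, φ x := by
        rw [← univ_product_univ, expect_product]
        simp

noncomputable def boxAvg (S : Finset ι) (F : (∀ i, X i) → ℂ) : ℂ :=
  𝔼 x₀, 𝔼 x₁, boxProd S F x₀ x₁

variable {S : Finset ι} {κ : ι} (F : (∀ i, X i) → ℂ)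

lemma boxAvg_empty : boxAvg ∅ F = 𝔼 x, F x := by
  cases isEmpty_or_nonempty (∀ i, X i) <;> simp [boxAvg]

lemma boxAvg_insert (hκ : κ ∉ S) :
    boxAvg (insert κ S) F =
      ((𝔼 x₀, 𝔼 x₁, ‖𝔼 y, boxProd S F (update x₀ κ y) x₁‖ ^ 2 : ℝ) : ℂ) := by
  calc boxAvg (insert κ S) F
      = 𝔼 x₀, 𝔼 y, 𝔼 x₁, 𝔼 y', boxProd (insert κ S) F (update x₀ κ y) (update x₁ κ y') := by
        rw [boxAvg, ← expect_expect_update _ κ]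
        exact expect_congr rfl fun x₀ _ => expect_congr rfl fun y _ =>
          (expect_expect_update _ κ).symm
    _ = 𝔼 x₀, 𝔼 x₁, 𝔼 y, 𝔼 y',
          boxProd S F (update x₀ κ y) x₁ * starRingEnd ℂ (boxProd S F (update x₀ κ y') x₁) := by
        simp only [boxProd_insert_update _ _ _ hκ]
        exact expect_congr rfl fun x₀ _ => expect_comm ..
    _ = 𝔼 x₀, 𝔼 x₁, ((‖𝔼 y, boxProd S F (update x₀ κ y) x₁‖ ^ 2 : ℝ) : ℂ) := by
        simp only [Complex.ofReal_pow, ← Complex.mul_conj', map_expect, expect_mul_expect]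
    _ = _ := by simp only [Complex.ofReal_expect]

lemma norm_boxAvg_eq_re (hS : S.Nonempty) : ‖boxAvg S F‖ = (boxAvg S F).re := by
  obtain ⟨κ, hκ⟩ := hS
  rw [← insert_erase hκ, boxAvg_insert F (notMem_erase κ S), Complex.norm_real, Complex.ofReal_re,
    Real.norm_eq_abs, abs_of_nonneg (by positivity)]

end BoxAverage

section CauchySchwarz

variable {ι : Type*} [Fintype ι] [DecidableEq ι] {X : ι → Type*} [∀ i, Fintype (X i)]
  {S : Finset ι} {κ : ι}

lemma norm_expect_boxProd_mul_sq_le (hκ : κ ∉ S) (F : (∀ i, X i) → ℂ)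
    (Γ : (∀ i, X i) → (∀ i, X i) → ℂ) (hΓ : ∀ x₀ x₁ y, Γ (update x₀ κ y) x₁ = Γ x₀ x₁)
    (hΓ_le : ∀ x₀ x₁, ‖Γ x₀ x₁‖ ≤ 1) :
    ‖𝔼 x₀, 𝔼 x₁, boxProd S F x₀ x₁ * Γ x₀ x₁‖ ^ 2 ≤ (boxAvg (insert κ S) F).re := by
  set W : (∀ i, X i) → (∀ i, X i) → ℂ := fun x₀ x₁ => 𝔼 y, boxProd S F (update x₀ κ y) x₁
  have hW : 𝔼 x₀, 𝔼 x₁, boxProd S F x₀ x₁ * Γ x₀ x₁ = 𝔼 x₀, 𝔼 x₁, W x₀ x₁ * Γ x₀ x₁ := by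
    rw [← expect_expect_update _ κ]
    simp only [hΓ, W, expect_mul]
    exact expect_congr rfl fun x₀ _ => expect_comm ..
  have hW_le : ‖𝔼 x₀, 𝔼 x₁, W x₀ x₁ * Γ x₀ x₁‖ ≤ 𝔼 x₀, 𝔼 x₁, ‖W x₀ x₁‖ :=
    (RCLike.norm_expect_le (K := ℂ)).trans <| expect_le_expect fun x₀ _ =>
      (RCLike.norm_expect_le (K := ℂ)).trans <| expect_le_expect fun x₁ _ => by
        rw [norm_mul]
        exact mul_le_of_le_one_right (norm_nonneg _) (hΓ_le x₀ x₁)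
  calc ‖𝔼 x₀, 𝔼 x₁, boxProd S F x₀ x₁ * Γ x₀ x₁‖ ^ 2
      ≤ (𝔼 x₀, 𝔼 x₁, ‖W x₀ x₁‖) ^ 2 := by rw [hW]; gcongr
    _ ≤ 𝔼 x₀, (𝔼 x₁, ‖W x₀ x₁‖) ^ 2 := sq_expect_le_expect_sq _ _
    _ ≤ 𝔼 x₀, 𝔼 x₁, ‖W x₀ x₁‖ ^ 2 := expect_le_expect fun x₀ _ => sq_expect_le_expect_sq _ _
    _ = (boxAvg (insert κ S) F).re := by rw [boxAvg_insert F hκ, Complex.ofReal_re]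

lemma norm_boxAvg_mul_sq_le (hκ : κ ∉ S) (F G : (∀ i, X i) → ℂ)
    (hG : ∀ x y, G (update x κ y) = G x) (hG_le : ∀ x, ‖G x‖ ≤ 1) :
    ‖boxAvg S (fun x => F x * G x)‖ ^ 2 ≤ (boxAvg (insert κ S) F).re := by
  simpa only [boxAvg, boxProd_mul] using
    norm_expect_boxProd_mul_sq_le hκ F (boxProd S G)
      (fun x₀ x₁ y => boxProd_update_left G x₀ x₁ hκ hG y)
      (fun x₀ x₁ => norm_boxProd_le_one G x₀ x₁ hG_le)

end CauchySchwarz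

section Main

variable {ι : Type*} [Fintype ι] [DecidableEq ι] {X : ι → Type*} [∀ i, Fintype (X i)]

lemma norm_expect_pow_le_norm_boxAvg (f : (∀ i, X i) → ℂ) (g : ι → (∀ i, X i) → ℂ)
    (hg : ∀ i x y, g i (update x i y) = g i x) (hg_le : ∀ i x, ‖g i x‖ ≤ 1) (S : Finset ι) :
    ‖𝔼 x, f x * ∏ i, g i x‖ ^ 2 ^ #S ≤ ‖boxAvg S (fun x => f x * ∏ i ∈ Sᶜ, g i x)‖ := by
  induction S using Finset.induction_on with
  | empty => simp [boxAvg_empty]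
  | insert κ S hκ ih =>
    have hsplit : (fun x => f x * ∏ i ∈ Sᶜ, g i x) =
        fun x => (f x * ∏ i ∈ (insert κ S)ᶜ, g i x) * g κ x := by
      ext x
      rw [compl_insert, mul_assoc, prod_erase_mul _ _ (mem_compl.2 hκ)]
    calc ‖𝔼 x, f x * ∏ i, g i x‖ ^ 2 ^ #(insert κ S)
        = (‖𝔼 x, f x * ∏ i, g i x‖ ^ 2 ^ #S) ^ 2 := by
          rw [card_insert_of_notMem hκ, pow_succ, pow_mul]
      _ ≤ ‖boxAvg S (fun x => f x * ∏ i ∈ Sᶜ, g i x)‖ ^ 2 := by gcongr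
      _ ≤ (boxAvg (insert κ S) (fun x => f x * ∏ i ∈ (insert κ S)ᶜ, g i x)).re := by
          rw [hsplit]
          exact norm_boxAvg_mul_sq_le hκ _ _ (hg κ) (hg_le κ)
      _ ≤ _ := Complex.re_le_norm _

end Main

theorem stmt3_general (s : ℕ) (hs : 1 ≤ s) (X : Fin s → Type) [∀ i, Fintype (X i)]
    (f : (∀ i, X i) → ℂ) (g : Fin s → (∀ i, X i) → ℂ)
    (hg1 : ∀ i x, ‖g i x‖ ≤ 1)
    (hgind : ∀ (i : Fin s) (x y : ∀ j, X j), (∀ j, j ≠ i → x j = y j) → g i x = g i y) :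
    ‖(∑ x : ∀ i, X i, f x * ∏ i, g i x) / (Fintype.card (∀ i, X i) : ℂ)‖ ^ (2 ^ s) ≤
      ((∑ x0 : ∀ i, X i, ∑ x1 : ∀ i, X i,
          ∏ ω : Fin s → Bool,
            conjPow (∑ i, if ω i then 1 else 0)
              (f (fun i => if ω i then x1 i else x0 i))) /
        ((Fintype.card (∀ i, X i) : ℂ) ^ 2)).re := by
  have key := norm_expect_pow_le_norm_boxAvg f g
    (fun i x y => hgind i _ _ fun j hj => update_of_ne hj _ _) hg1 univ
  rw [card_univ, Fintype.card_fin, compl_univ,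
    norm_boxAvg_eq_re _ (univ_nonempty_iff.2 ⟨⟨0, hs⟩⟩)] at key
  simp only [prod_empty, mul_one] at key
  rw [← Fintype.expect_eq_sum_div_card, sq, ← div_div, sum_div]
  simpa only [← Fintype.expect_eq_sum_div_card, prod_conjPow_eq_boxProd_univ, boxAvg] using key

/-- Gowers–Cauchy–Schwarz inequality for multilinear averages. -/
theorem stmt3 (s : ℕ) (hs : 1 ≤ s) (X : Fin s → Type) [∀ i, Fintype (X i)]
    [∀ i, Nonempty (X i)] (f : (∀ i, X i) → ℂ) (g : Fin s → (∀ i, X i) → ℂ)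
    (hg1 : ∀ i x, ‖g i x‖ ≤ 1)
    (hgind : ∀ (i : Fin s) (x y : ∀ j, X j), (∀ j, j ≠ i → x j = y j) → g i x = g i y) :
    ‖(∑ x : ∀ i, X i, f x * ∏ i, g i x) / (Fintype.card (∀ i, X i) : ℂ)‖ ^ (2 ^ s) ≤
      ((∑ x0 : ∀ i, X i, ∑ x1 : ∀ i, X i,
          ∏ ω : Fin s → Bool,
            conjPow (∑ i, if ω i then 1 else 0)
              (f (fun i => if ω i then x1 i else x0 i))) /
        ((Fintype.card (∀ i, X i) : ℂ) ^ 2)).re :=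
  stmt3_general s hs X f g hg1 hgind
end

section
/- Let M > 0 be an integer and γ ∈ (0,1]. The number of s-tuples (a₁,…,a_s) ∈ [M]^s for which there exist distinct nonzero ω, ω' ∈ {0,1}^s with gcd(a·ω, a·ω') ≥ γ^{-1} is at most O_s(γ M^s), where a·ω = Σ_i a_i ω_i. -/
/-
Let `d = gcd(a·ω, a·ω')` with `ω ≠ ω'` both nonzero. Choose a coordinate `i` where, say,
`ω i = 1` and `ω' i = 0`, and a coordinate `j` with `ω' j = 1`. Once all other coordinates of `a`
are fixed, `d ∣ a·ω'` confines `a_j` to one residue class mod `d`, and then `d ∣ a·ω` confines `a_i`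
to one, so at most `(M/d + 1)² M^(s-2) ≤ (s+1)² M^s / d²` tuples have `d` dividing both sums.
As `d ≤ a·ω' ≤ sM`, summing over `γ⁻¹ ≤ d ≤ sM` and over the at most `4^s` pairs `(ω, ω')`
gives `O(s² 4^s γ M^s)`.
-/

open Finset Fintype Function

lemma Int.card_filter_Icc_dvd_add_le (M d : ℕ) (hd : 0 < d) (c : ℤ) :
    #{x ∈ Icc (1 : ℤ) M | (d : ℤ) ∣ x + c} ≤ M / d + 1 := by
  have hd' : (0 : ℤ) < d := by exact_mod_cast hd
  calc #{x ∈ Icc (1 : ℤ) M | (d : ℤ) ∣ x + c} ≤ #(Icc (0 : ℤ) (M / d : ℕ)) := by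
        refine card_le_card_of_injOn (fun x => (x - 1) / d) (fun x hx => ?_) fun x hx y hy hxy => ?_
        · simp only [coe_filter, Set.mem_ofPred_eq, mem_Icc] at hx
          simp only [coe_Icc, Set.mem_Icc, Int.natCast_div]
          exact ⟨Int.ediv_nonneg (by omega) hd'.le, Int.ediv_le_ediv hd' (by omega)⟩
        · simp only [coe_filter, Set.mem_ofPred_eq] at hx hy
          -- `x` and `y` lie in one residue class, so they agree once their quotients do
          have hmod : (x - 1) % d = (y - 1) % d :=
            Int.ModEq.symm <| Int.modEq_iff_dvd.2 <| by simpa using dvd_sub hx.2 hy.2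
          have hx' := Int.mul_ediv_add_emod (x - 1) d
          have hy' := Int.mul_ediv_add_emod (y - 1) d
          simp only at hxy
          rw [hxy, hmod] at hx'
          omega
    _ = M / d + 1 := by rw [Int.card_Icc, sub_zero, ← Nat.cast_add_one, Int.toNat_natCast]

lemma div_add_one_sq_mul_pow_le {s M d : ℕ} (hs : 2 ≤ s) (hd : 0 < d) (hdM : d ≤ s * M) :
    (((M / d + 1) ^ 2 * M ^ (s - 2) : ℕ) : ℝ) ≤ (s + 1) ^ 2 * M ^ s * ((d : ℝ) ^ 2)⁻¹ := by
  have hd' : (0 : ℝ) < d := by exact_mod_cast hd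
  have hdM' : (d : ℝ) ≤ s * M := by exact_mod_cast hdM
  have hq : ((M / d : ℕ) : ℝ) + 1 ≤ (s + 1) * M / d :=
    calc ((M / d : ℕ) : ℝ) + 1 ≤ M / d + s * M / d :=
          add_le_add Nat.cast_div_le ((one_le_div hd').2 hdM')
      _ = (s + 1) * M / d := by ring
  calc (((M / d + 1) ^ 2 * M ^ (s - 2) : ℕ) : ℝ) = (((M / d : ℕ) : ℝ) + 1) ^ 2 * M ^ (s - 2) := by
        push_cast; ring
    _ ≤ ((s + 1) * M / d) ^ 2 * M ^ (s - 2) := by gcongr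
    _ = (s + 1) ^ 2 * (M ^ 2 * M ^ (s - 2)) * ((d : ℝ) ^ 2)⁻¹ := by ring
    _ = (s + 1) ^ 2 * M ^ s * ((d : ℝ) ^ 2)⁻¹ := by rw [← pow_add, Nat.add_sub_cancel' hs]

lemma sum_Icc_inv_sq_le {D : ℕ} (hD : 0 < D) (N : ℕ) :
    ∑ d ∈ Icc D N, ((d : ℝ) ^ 2)⁻¹ ≤ 2 / D := by
  have hIcc : Icc D N = Ioo (D - 1) (N + 1) := by
    ext
    simp only [mem_Icc, mem_Ioo]
    omega
  calc ∑ d ∈ Icc D N, ((d : ℝ) ^ 2)⁻¹ ≤ 2 / ((D - 1 : ℕ) + 1 : ℝ) :=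
        hIcc ▸ sum_Ioo_inv_sq_le (D - 1) (N + 1)
    _ = 2 / D := by rw [← Nat.cast_add_one, Nat.sub_add_cancel hD]

section

variable {ι : Type*}

lemma exists_pivots {ω ω' : ι → Bool} (hne : ω ≠ ω') (hω : ω ≠ fun _ => false)
    (hω' : ω' ≠ fun _ => false) :
    ∃ i j, i ≠ j ∧ (ω i ∧ ω' i = false ∧ ω' j ∨ ω' i ∧ ω i = false ∧ ω j) := by
  obtain ⟨i, hi⟩ := Function.ne_iff.1 hne
  cases hωi : ω i
  · obtain ⟨j, hj⟩ := Function.ne_iff.1 hω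
    exact ⟨i, j, by rintro rfl; simp_all,
      .inr ⟨by simpa [hωi] using hi.symm, hωi, by simpa using hj⟩⟩
  · obtain ⟨j, hj⟩ := Function.ne_iff.1 hω'
    exact ⟨i, j, by rintro rfl; simp_all,
      .inl ⟨hωi, by simpa [hωi] using hi.symm, by simpa using hj⟩⟩

variable [Fintype ι]

/-- `boolDot ω a` is the paper's `a·ω`. -/
def boolDot (ω : ι → Bool) (a : ι → ℤ) : ℤ := ∑ k, if ω k then a k else 0

lemma boolDot_pos {ω : ι → Bool} (hω : ω ≠ fun _ => false) {a : ι → ℤ} (ha : ∀ k, 0 < a k) :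
    0 < boolDot ω a := by
  obtain ⟨j, hj⟩ := Function.ne_iff.1 hω
  refine sum_pos' (fun k _ => ?_) ⟨j, mem_univ j, by simpa [hj] using ha j⟩
  split
  · exact (ha k).le
  · exact le_rfl

lemma boolDot_le (ω : ι → Bool) {a : ι → ℤ} {M : ℤ} (hM : 0 ≤ M) (ha : ∀ k, a k ≤ M) :
    boolDot ω a ≤ Fintype.card ι * M := by
  calc boolDot ω a ≤ ∑ _k : ι, M := sum_le_sum fun k _ => by split <;> simp [ha k, hM]
    _ = Fintype.card ι * M := by simp

lemma two_le_card_of_ne {ω ω' : ι → Bool} (hne : ω ≠ ω') (hω : ω ≠ fun _ => false)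
    (hω' : ω' ≠ fun _ => false) : 2 ≤ Fintype.card ι := by
  obtain ⟨i, j, hij, -⟩ := exists_pivots hne hω hω'
  exact Fintype.one_lt_card_iff.2 ⟨i, j, hij⟩

variable [DecidableEq ι]

noncomputable def commonDivisorTuples (ω ω' : ι → Bool) (M d : ℕ) : Finset (ι → ℤ) :=
  {a ∈ piFinset fun _ : ι => Icc (1 : ℤ) M | (d : ℤ) ∣ boolDot ω a ∧ (d : ℤ) ∣ boolDot ω' a}

lemma commonDivisorTuples_comm (ω ω' : ι → Bool) (M d : ℕ) :
    commonDivisorTuples ω ω' M d = commonDivisorTuples ω' ω M d :=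
  filter_congr fun _ _ => and_comm

lemma boolDot_update (ω : ι → Bool) (a : ι → ℤ) (i : ι) (x : ℤ) :
    boolDot ω (update a i x) = (if ω i then x else 0) + boolDot ω (update a i 0) := by
  have hoff : ∀ y : ℤ, ∑ k ∈ univ.erase i, (if ω k then update a i y k else 0) =
      ∑ k ∈ univ.erase i, if ω k then a k else 0 := fun y =>
    sum_congr rfl fun k hk => by rw [update_of_ne (ne_of_mem_erase hk)]
  rw [boolDot, boolDot, ← add_sum_erase _ _ (mem_univ i), ← add_sum_erase _ _ (mem_univ i),
    hoff, hoff, update_self, update_self]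
  split <;> simp

lemma boolDot_eq_add_boolDot_update_zero {ω : ι → Bool} {i : ι} (hωi : ω i) (a : ι → ℤ) :
    boolDot ω a = a i + boolDot ω (update a i 0) := by
  simpa [hωi] using boolDot_update ω a i (a i)

lemma boolDot_update_zero {ω : ι → Bool} {i : ι} (hωi : ω i = false) (a : ι → ℤ) :
    boolDot ω (update a i 0) = boolDot ω a := by
  simpa [hωi] using (boolDot_update ω a i (a i)).symm

lemma card_le_mul_card_image_update_zero {ω : ι → Bool} {i : ι} (hωi : ω i) {M d : ℕ}
    (hd : 0 < d) (S : Finset (ι → ℤ))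
    (hS : ∀ a ∈ S, a i ∈ Icc (1 : ℤ) M ∧ (d : ℤ) ∣ boolDot ω a) :
    #S ≤ (M / d + 1) * #(S.image (update · i 0)) := by
  refine card_le_mul_card_image S _ fun b _ => ?_
  -- on a fiber only `a i` varies, and `d ∣ a i + boolDot ω b` pins it to one residue class
  calc #{a ∈ S | update a i 0 = b} ≤ #{x ∈ Icc (1 : ℤ) M | (d : ℤ) ∣ x + boolDot ω b} := by
        refine card_le_card_of_injOn (· i) (fun a ha => ?_) fun a ha a' ha' h => ?_
        · simp only [coe_filter, Set.mem_ofPred_eq] at ha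
          obtain ⟨hai, hdvd⟩ := hS a ha.1
          rw [boolDot_eq_add_boolDot_update_zero hωi, ha.2] at hdvd
          exact mem_filter.2 ⟨hai, hdvd⟩
        · simp only [coe_filter, Set.mem_ofPred_eq] at ha ha'
          calc a = update b i (a i) := by rw [← ha.2, update_idem, update_eq_self]
            _ = update b i (a' i) := by rw [show a i = a' i from h]
            _ = a' := by rw [← ha'.2, update_idem, update_eq_self]
    _ ≤ M / d + 1 := Int.card_filter_Icc_dvd_add_le M d hd _

lemma card_piFinset_ite_mem (T : Finset ι) (M : ℕ) :
    #(piFinset fun k => if k ∈ T then {0} else Icc (1 : ℤ) M) = M ^ (Fintype.card ι - #T) := by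
  rw [card_piFinset]
  simp only [apply_ite card, card_singleton, Int.card_Icc, add_sub_cancel_right, Int.toNat_natCast,
    prod_ite, prod_const_one, prod_const, one_mul, ← card_compl]
  congr 2
  ext
  simp

lemma card_filter_dvd_boolDot_le_of_pivots {ω ω' : ι → Bool} {i j : ι} (hij : i ≠ j)
    (hωi : ω i) (hω'i : ω' i = false) (hω'j : ω' j) {M d : ℕ} (hd : 0 < d) :
    #(commonDivisorTuples ω ω' M d) ≤ (M / d + 1) ^ 2 * M ^ (Fintype.card ι - 2) := by
  set S := commonDivisorTuples ω ω' M d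
  have hS : ∀ a ∈ S, (∀ k, a k ∈ Icc (1 : ℤ) M) ∧ (d : ℤ) ∣ boolDot ω a ∧ (d : ℤ) ∣ boolDot ω' a :=
    fun a ha => by simpa only [S, commonDivisorTuples, mem_filter, mem_piFinset] using ha
  have h₁ := card_le_mul_card_image_update_zero hωi hd S fun a ha => ⟨(hS a ha).1 i, (hS a ha).2.1⟩
  have h₂ := card_le_mul_card_image_update_zero hω'j hd (S.image (update · i 0)) <| by
    simp only [forall_mem_image]
    intro a ha
    rw [update_of_ne hij.symm, boolDot_update_zero hω'i]
    exact ⟨(hS a ha).1 j, (hS a ha).2.2⟩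
  have h₃ : #((S.image (update · i 0)).image (update · j 0)) ≤ M ^ (Fintype.card ι - 2) := by
    calc _ ≤ #(piFinset fun k => if k ∈ ({i, j} : Finset ι) then {0} else Icc (1 : ℤ) M) := by
          refine card_le_card fun b hb => ?_
          simp only [mem_image] at hb
          obtain ⟨_, ⟨a, ha, rfl⟩, rfl⟩ := hb
          refine mem_piFinset.2 fun k => ?_
          by_cases hki : k = i <;> by_cases hkj : k = j <;> simp [hki, hkj, hij, (hS a ha).1 k]
      _ = M ^ (Fintype.card ι - 2) := by rw [card_piFinset_ite_mem, card_pair hij]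
  calc #S ≤ (M / d + 1) * ((M / d + 1) * M ^ (Fintype.card ι - 2)) :=
        h₁.trans (Nat.mul_le_mul_left _ (h₂.trans (Nat.mul_le_mul_left _ h₃)))
    _ = (M / d + 1) ^ 2 * M ^ (Fintype.card ι - 2) := by ring

lemma card_filter_dvd_boolDot_le {ω ω' : ι → Bool} (hne : ω ≠ ω') (hω : ω ≠ fun _ => false)
    (hω' : ω' ≠ fun _ => false) {M d : ℕ} (hd : 0 < d) :
    #(commonDivisorTuples ω ω' M d) ≤ (M / d + 1) ^ 2 * M ^ (Fintype.card ι - 2) := by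
  obtain ⟨i, j, hij, ⟨hωi, hω'i, hω'j⟩ | ⟨hω'i, hωi, hωj⟩⟩ := exists_pivots hne hω hω'
  · exact card_filter_dvd_boolDot_le_of_pivots hij hωi hω'i hω'j hd
  · rw [commonDivisorTuples_comm]
    exact card_filter_dvd_boolDot_le_of_pivots hij hω'i hωi hωj hd

lemma gcd_boolDot_le (x : ℤ) {ω : ι → Bool} (hω : ω ≠ fun _ => false) {M : ℕ} {a : ι → ℤ}
    (ha : a ∈ piFinset fun _ : ι => Icc (1 : ℤ) M) :
    Int.gcd x (boolDot ω a) ≤ Fintype.card ι * M := by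
  have ha' : ∀ k, 1 ≤ a k ∧ a k ≤ M := fun k => mem_Icc.1 (mem_piFinset.1 ha k)
  have hpos := boolDot_pos hω fun k => (ha' k).1
  have := (Int.le_of_dvd hpos (Int.gcd_dvd_right x _)).trans
    (boolDot_le ω (Nat.cast_nonneg M) fun k => (ha' k).2)
  exact_mod_cast this

lemma exists_mem_commonDivisorTuples {ω ω' : ι → Bool} (hω' : ω' ≠ fun _ => false) {M D : ℕ}
    {a : ι → ℤ} (ha : a ∈ piFinset fun _ : ι => Icc (1 : ℤ) M)
    (hD : D ≤ Int.gcd (boolDot ω a) (boolDot ω' a)) :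
    ∃ d ∈ Icc D (Fintype.card ι * M), a ∈ commonDivisorTuples ω ω' M d :=
  ⟨_, mem_Icc.2 ⟨hD, gcd_boolDot_le _ hω' ha⟩,
    mem_filter.2 ⟨ha, Int.gcd_dvd_left _ _, Int.gcd_dvd_right _ _⟩⟩

lemma sum_card_filter_dvd_boolDot_le {ω ω' : ι → Bool} (hne : ω ≠ ω') (hω : ω ≠ fun _ => false)
    (hω' : ω' ≠ fun _ => false) {D : ℕ} (hD : 0 < D) (M : ℕ) :
    ∑ d ∈ Icc D (Fintype.card ι * M), (#(commonDivisorTuples ω ω' M d) : ℝ)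
      ≤ 2 * (Fintype.card ι + 1) ^ 2 * M ^ Fintype.card ι / D := by
  calc _ ≤ ∑ d ∈ Icc D (Fintype.card ι * M),
          (Fintype.card ι + 1) ^ 2 * M ^ Fintype.card ι * ((d : ℝ) ^ 2)⁻¹ := by
        refine sum_le_sum fun d hd => ?_
        have hd := mem_Icc.1 hd
        exact (Nat.cast_le.2 (card_filter_dvd_boolDot_le hne hω hω' (hD.trans_le hd.1))).trans
          (div_add_one_sq_mul_pow_le (two_le_card_of_ne hne hω hω') (hD.trans_le hd.1) hd.2)
    _ = (Fintype.card ι + 1) ^ 2 * M ^ Fintype.card ι *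
          ∑ d ∈ Icc D (Fintype.card ι * M), ((d : ℝ) ^ 2)⁻¹ := (mul_sum _ _ _).symm
    _ ≤ (Fintype.card ι + 1) ^ 2 * M ^ Fintype.card ι * (2 / D) := by
        gcongr
        exact sum_Icc_inv_sq_le hD _
    _ = 2 * (Fintype.card ι + 1) ^ 2 * M ^ Fintype.card ι / D := by ring

end

/-- For all but an `O_s(γ)`-proportion of `s`-tuples `(a₁,…,a_s) ∈ [M]^s`, all the
pairwise gcds `gcd(a·ω, a·ω')` over distinct nonzero `ω, ω' ∈ {0,1}^s` are `< γ⁻¹`. -/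
theorem stmt7 (s : ℕ) :
    ∃ C : ℝ, 0 < C ∧ ∀ (M : ℕ) (γ : ℝ), 0 < M → 0 < γ → γ ≤ 1 →
      (((Fintype.piFinset (fun _ : Fin s => Finset.Icc (1 : ℤ) (M : ℤ))).filter
          (fun a : Fin s → ℤ => ∃ ω ω' : Fin s → Bool,
            ω ≠ ω' ∧ ω ≠ (fun _ => false) ∧ ω' ≠ (fun _ => false) ∧
            γ⁻¹ ≤ (Int.gcd (∑ i, if ω i then a i else 0)
                (∑ i, if ω' i then a i else 0) : ℝ))).card : ℝ)
        ≤ C * γ * (M : ℝ) ^ s := by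
  refine ⟨2 * (s + 1) ^ 2 * 4 ^ s, by positivity, fun M γ _ hγ _ => ?_⟩
  set D := ⌈γ⁻¹⌉₊
  have hD : 0 < D := Nat.ceil_pos.2 (inv_pos.2 hγ)
  set P := (univ : Finset ((Fin s → Bool) × (Fin s → Bool))).filter
    fun p => p.1 ≠ p.2 ∧ p.1 ≠ (fun _ => false) ∧ p.2 ≠ fun _ => false
  have hP : (#P : ℝ) ≤ 4 ^ s := by
    calc (#P : ℝ) ≤ Fintype.card ((Fin s → Bool) × (Fin s → Bool)) := by
          exact_mod_cast card_le_univ P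
      _ = 4 ^ s := by simp [← mul_pow]
  calc _ ≤ (#(P.biUnion fun p => (Icc D (s * M)).biUnion (commonDivisorTuples p.1 p.2 M)) : ℝ) := by
        refine Nat.cast_le.2 (card_le_card fun a ha => ?_)
        obtain ⟨ha, ω, ω', hne, hω, hω', hγg⟩ := mem_filter.1 ha
        obtain ⟨d, hd, had⟩ := exists_mem_commonDivisorTuples hω' ha (Nat.ceil_le.2 hγg)
        rw [Fintype.card_fin] at hd
        exact mem_biUnion.2 ⟨(ω, ω'), by simp [P, hne, hω, hω'], mem_biUnion.2 ⟨d, hd, had⟩⟩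
    _ ≤ ∑ p ∈ P, ∑ d ∈ Icc D (s * M), (#(commonDivisorTuples p.1 p.2 M d) : ℝ) := by
        exact_mod_cast card_biUnion_le.trans (sum_le_sum fun _ _ => card_biUnion_le)
    _ ≤ ∑ _p ∈ P, (2 * (s + 1) ^ 2 * M ^ s / D : ℝ) := by
        refine sum_le_sum fun p hp => ?_
        obtain ⟨hne, hω, hω'⟩ := (mem_filter.1 hp).2
        have := sum_card_filter_dvd_boolDot_le hne hω hω' hD M
        rwa [Fintype.card_fin] at this
    _ ≤ 4 ^ s * (2 * (s + 1) ^ 2 * M ^ s / D) := by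
        rw [sum_const, nsmul_eq_mul]
        gcongr
    _ = 2 * (s + 1) ^ 2 * 4 ^ s * (D : ℝ)⁻¹ * M ^ s := by ring
    _ ≤ 2 * (s + 1) ^ 2 * 4 ^ s * γ * M ^ s := by
        gcongr
        exact inv_le_of_inv_le₀ hγ (Nat.le_ceil _)
end

section
/- U²-inverse theorem for localized norms: Let L > 0, δ, δ' ∈ (0,1], and let f : ℤ → ℂ be 1-bounded and supported on [L]. If ‖f‖_{U²_{[δ'L]}([L])} ≥ δ, then there exists β ∈ 𝕋 such that |𝔼_{x∈[L]} f(x) e(βx)| ≫ (δδ')^{O(1)}. -/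
/-
Expanding the four-fold product, `‖f‖⁴_{U²_{[M]}([N])}` is `(N M⁴)⁻¹` times
`∑ₓ ∑_{b,b' ∈ [M]} |∑_{a ∈ [M]} f(x+a+b) f̄(x+a+b')|²`. All the arguments involved lie in
`[-2N, 3N]`, so nothing changes after passing to `ℤ/K` with `K = 3N + 1`, where Fourier analysis
is exact. Parseval in `x` turns the inner sum over `a` into the multiplier `∑_{a ∈ [M]} ψ(a)`,
and the remaining Fourier coefficient depends on `(b, b')` only through `b - b'`: it is a
twisted autocorrelation of `f`, whose `ℓ²`-mass over all shifts is, by Parseval once more,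
at most `‖f̂‖²_∞ ‖f‖²₂`. Summing up, `δ⁴ ≤ ‖f̂‖²_∞ / M²`, so some frequency `β` has
`|f̂(β)| ≥ δ² M ≥ δ² δ' N / 2`.
-/

open scoped BigOperators

/-- The `2^d`-th power of the normalized Gowers box norm
`‖f‖_{□^d_{Q₁,…,Q_d}(S)}` of a function `f : ℤ → ℂ` supported on `S`. -/
noncomputable def boxNormPow (d : ℕ) (Q : Fin d → Finset ℤ) (S : Finset ℤ) (f : ℤ → ℂ) : ℝ :=
  (S.card : ℝ)⁻¹ * ((∏ i, ((Q i).card : ℝ))⁻¹ ^ 2) *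
    ∑' x : ℤ,
      (∑ h ∈ Fintype.piFinset Q, ∑ h' ∈ Fintype.piFinset Q,
        ∏ ω : Fin d → Bool,
          conjPow (∑ i, if ω i then 1 else 0)
            (f (x + ∑ i, if ω i then h i else h' i))).re

/-- The normalized Gowers box norm `‖f‖_{□^d_{Q₁,…,Q_d}(S)}`. -/
noncomputable def boxNorm (d : ℕ) (Q : Fin d → Finset ℤ) (S : Finset ℤ) (f : ℤ → ℂ) : ℝ :=
  boxNormPow d Q S f ^ (((2 : ℝ) ^ d)⁻¹)

open Finset ComplexConjugate

noncomputable def boxCorrelation {G : Type*} [AddCommGroup G] (F : G → ℂ) (A : Finset G) (x : G) :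
    ℝ :=
  ∑ b ∈ A, ∑ b' ∈ A, ‖∑ a ∈ A, F (x + a + b) * conj (F (x + a + b'))‖ ^ 2

lemma boxCorrelation_nonneg {G : Type*} [AddCommGroup G] (F : G → ℂ) (A : Finset G) (x : G) :
    0 ≤ boxCorrelation F A x :=
  sum_nonneg fun _ _ => sum_nonneg fun _ _ => sq_nonneg _

section FiniteGroup

variable {G : Type*} [AddCommGroup G] [Fintype G]

lemma AddChar.apply_mul_conj_apply (ψ : AddChar G ℂ) (x y : G) : ψ x * conj (ψ y) = ψ (x - y) := by
  rw [sub_eq_add_neg, AddChar.map_add_eq_mul, AddChar.map_neg_eq_conj]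

theorem AddChar.sum_norm_sq_sum_mul (W : Finset G) (φ : G → ℂ) :
    ∑ ψ : AddChar G ℂ, ‖∑ x ∈ W, φ x * ψ x‖ ^ 2 = Fintype.card G * ∑ x ∈ W, ‖φ x‖ ^ 2 := by
  classical
  apply Complex.ofReal_injective
  push_cast
  simp_rw [← Complex.mul_conj', map_sum, map_mul, sum_mul_sum]
  rw [sum_comm, mul_sum]
  refine sum_congr rfl fun x hx => ?_
  have expand (y : G) (ψ : AddChar G ℂ) :
      φ x * ψ x * (conj (φ y) * conj (ψ y)) = φ x * conj (φ y) * ψ (x - y) := by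
    rw [← AddChar.apply_mul_conj_apply]; ring
  simp only [expand]
  rw [sum_comm]
  simp_rw [← mul_sum, AddChar.sum_apply_eq_ite, sub_eq_zero, mul_ite, mul_zero, sum_ite_eq,
    if_pos hx]
  ring

lemma AddChar.sum_add_mul (ψ : AddChar G ℂ) (g : G → ℂ) (a : G) :
    ∑ x, g (x + a) * ψ x = conj (ψ a) * ∑ x, g x * ψ x := by
  rw [← (Equiv.subRight a).sum_comp, mul_sum]
  refine sum_congr rfl fun y _ => ?_
  rw [Equiv.subRight_apply, sub_add_cancel, ← AddChar.apply_mul_conj_apply]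
  ring

theorem AddChar.sum_norm_sq_sum_add_eq (g : G → ℂ) (A : Finset G) :
    Fintype.card G * ∑ x, ‖∑ a ∈ A, g (x + a)‖ ^ 2 =
      ∑ ψ : AddChar G ℂ, ‖∑ a ∈ A, ψ a‖ ^ 2 * ‖∑ x, g x * ψ x‖ ^ 2 := by
  rw [← AddChar.sum_norm_sq_sum_mul]
  refine sum_congr rfl fun ψ _ => ?_
  simp_rw [sum_mul, sum_comm (s := univ), AddChar.sum_add_mul, ← sum_mul, ← map_sum, norm_mul,
    Complex.norm_conj, mul_pow]

noncomputable def twistedAutocorrelation (F : G → ℂ) (ψ : AddChar G ℂ) (t : G) : ℂ :=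
  ∑ v, F (v + t) * conj (F v) * ψ v

lemma norm_sum_mul_conj_mul_addChar (F : G → ℂ) (ψ : AddChar G ℂ) (b b' : G) :
    ‖∑ y, F (y + b) * conj (F (y + b')) * ψ y‖ = ‖twistedAutocorrelation F ψ (b - b')‖ := by
  have h := ψ.sum_add_mul (fun y => F (y + b) * conj (F (y + b'))) (-b')
  simp only [add_assoc, neg_add_eq_sub, sub_self, add_zero] at h
  rw [twistedAutocorrelation, h, norm_mul, Complex.norm_conj, AddChar.norm_apply, one_mul]

lemma sum_twistedAutocorrelation_mul (F : G → ℂ) (ψ η : AddChar G ℂ) :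
    ∑ t, twistedAutocorrelation F ψ t * η t =
      (∑ u, F u * η u) * conj (∑ v, F v * (η - ψ) v) := by
  conv_lhs => simp only [twistedAutocorrelation, sum_mul]
  rw [sum_comm, map_sum, mul_sum]
  refine sum_congr rfl fun v _ => ?_
  calc ∑ t, F (v + t) * conj (F v) * ψ v * η t = conj (F v) * ψ v * ∑ t, F (t + v) * η t := by
        rw [mul_sum]; exact sum_congr rfl fun t _ => by rw [add_comm]; ring
    _ = _ := by
        rw [η.sum_add_mul, AddChar.sub_apply, map_mul, map_mul, AddChar.map_neg_eq_conj,
          Complex.conj_conj]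
        ring

theorem sum_norm_sq_twistedAutocorrelation_le (F : G → ℂ) (ψ : AddChar G ℂ) {B : ℝ}
    (hB : ∀ χ : AddChar G ℂ, ‖∑ x, F x * χ x‖ ^ 2 ≤ B) :
    ∑ t, ‖twistedAutocorrelation F ψ t‖ ^ 2 ≤ B * ∑ x, ‖F x‖ ^ 2 := by
  have hG : (0 : ℝ) < Fintype.card G := by exact_mod_cast Fintype.card_pos
  refine le_of_mul_le_mul_left ?_ hG
  calc (Fintype.card G : ℝ) * ∑ t, ‖twistedAutocorrelation F ψ t‖ ^ 2
      = ∑ η : AddChar G ℂ, ‖∑ u, F u * η u‖ ^ 2 * ‖∑ v, F v * (η - ψ) v‖ ^ 2 := by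
        simp_rw [← AddChar.sum_norm_sq_sum_mul, sum_twistedAutocorrelation_mul, norm_mul,
          Complex.norm_conj, mul_pow]
    _ ≤ ∑ η : AddChar G ℂ, ‖∑ u, F u * η u‖ ^ 2 * B := by
        gcongr with η; exact hB _
    _ = Fintype.card G * (B * ∑ x, ‖F x‖ ^ 2) := by
        rw [← sum_mul, AddChar.sum_norm_sq_sum_mul]; ring

lemma sum_sum_sub_le_card_mul_sum (h : G → ℝ) (hh : ∀ t, 0 ≤ h t) (A : Finset G) :
    ∑ b ∈ A, ∑ b' ∈ A, h (b - b') ≤ #A * ∑ t, h t := by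
  rw [sum_comm, ← nsmul_eq_mul, ← sum_const]
  refine sum_le_sum fun b' _ => ?_
  calc ∑ b ∈ A, h (b - b') ≤ ∑ b, h (b - b') := sum_le_univ_sum_of_nonneg fun _ => hh _
    _ = ∑ t, h t := (Equiv.subRight b').sum_comp h

theorem sum_boxCorrelation_le (F : G → ℂ) (A : Finset G) {B : ℝ}
    (hB : ∀ χ : AddChar G ℂ, ‖∑ x, F x * χ x‖ ^ 2 ≤ B) :
    ∑ x, boxCorrelation F A x ≤ #A ^ 2 * B * ∑ x, ‖F x‖ ^ 2 := by
  have hG : (0 : ℝ) < Fintype.card G := by exact_mod_cast Fintype.card_pos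
  refine le_of_mul_le_mul_left ?_ hG
  calc (Fintype.card G : ℝ) * ∑ x, boxCorrelation F A x
      = ∑ b ∈ A, ∑ b' ∈ A, Fintype.card G *
          ∑ x, ‖∑ a ∈ A, F (x + a + b) * conj (F (x + a + b'))‖ ^ 2 := by
        simp only [boxCorrelation, mul_sum]
        rw [sum_comm]
        exact sum_congr rfl fun b _ => sum_comm
    _ = ∑ b ∈ A, ∑ b' ∈ A, ∑ ψ : AddChar G ℂ,
          ‖∑ a ∈ A, ψ a‖ ^ 2 * ‖twistedAutocorrelation F ψ (b - b')‖ ^ 2 := by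
        refine sum_congr rfl fun b _ => sum_congr rfl fun b' _ => ?_
        refine (AddChar.sum_norm_sq_sum_add_eq (fun y => F (y + b) * conj (F (y + b'))) A).trans ?_
        simp_rw [norm_sum_mul_conj_mul_addChar]
    _ = ∑ ψ : AddChar G ℂ, ‖∑ a ∈ A, ψ a‖ ^ 2 *
          ∑ b ∈ A, ∑ b' ∈ A, ‖twistedAutocorrelation F ψ (b - b')‖ ^ 2 := by
        simp_rw [mul_sum]
        exact (sum_congr rfl fun b _ => sum_comm).trans sum_comm
    _ ≤ ∑ ψ : AddChar G ℂ, ‖∑ a ∈ A, ψ a‖ ^ 2 * (#A * (B * ∑ x, ‖F x‖ ^ 2)) := by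
        refine sum_le_sum fun ψ _ => mul_le_mul_of_nonneg_left ?_ (sq_nonneg _)
        have h := sum_sum_sub_le_card_mul_sum (fun t => ‖twistedAutocorrelation F ψ t‖ ^ 2)
          (fun _ => sq_nonneg _) A
        have h' := sum_norm_sq_twistedAutocorrelation_le F ψ hB
        exact h.trans (mul_le_mul_of_nonneg_left h' (Nat.cast_nonneg _))
    _ = Fintype.card G * (#A ^ 2 * B * ∑ x, ‖F x‖ ^ 2) := by
        have h := AddChar.sum_norm_sq_sum_mul A (fun _ => (1 : ℂ))
        simp only [one_mul, norm_one, one_pow, sum_const, nsmul_eq_mul, mul_one] at h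
        rw [← sum_mul, h]
        ring

end FiniteGroup

lemma prod_conjPow_fin_two (f : ℤ → ℂ) (x : ℤ) (h h' : Fin 2 → ℤ) :
    ∏ ω : Fin 2 → Bool,
        conjPow (∑ i, if ω i then 1 else 0) (f (x + ∑ i, if ω i then h i else h' i)) =
      f (x + h 0 + h 1) * conj (f (x + h 0 + h' 1)) *
        conj (f (x + h' 0 + h 1) * conj (f (x + h' 0 + h' 1))) := by
  rw [← (piFinTwoEquiv fun _ => Bool).symm.prod_comp, Fintype.prod_prod_type]
  simp only [Fintype.prod_bool, piFinTwoEquiv_symm_apply, Fin.sum_univ_two, conjPow]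
  norm_num [add_assoc]

lemma sum_piFinset_fin_two {α M : Type*} [DecidableEq α] [AddCommMonoid M] (Q : Finset α)
    (g : (Fin 2 → α) → M) :
    ∑ h ∈ Fintype.piFinset (fun _ : Fin 2 => Q), g h = ∑ a ∈ Q, ∑ b ∈ Q, g ![a, b] := by
  rw [← sum_product']
  exact sum_nbij' (fun h => (h 0, h 1)) (fun p => ![p.1, p.2]) (by simp_all [Fin.forall_fin_two])
    (by simp_all [Fin.forall_fin_two]) (fun h _ => by ext i; fin_cases i <;> rfl) (by simp)
    (fun h _ => by congr; ext i; fin_cases i <;> rfl)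

lemma re_sum_prod_conjPow_eq_boxCorrelation (f : ℤ → ℂ) (Q : Finset ℤ) (x : ℤ) :
    (∑ h ∈ Fintype.piFinset (fun _ : Fin 2 => Q), ∑ h' ∈ Fintype.piFinset (fun _ : Fin 2 => Q),
      ∏ ω : Fin 2 → Bool,
        conjPow (∑ i, if ω i then 1 else 0) (f (x + ∑ i, if ω i then h i else h' i))).re =
      boxCorrelation f Q x := by
  simp only [sum_piFinset_fin_two, prod_conjPow_fin_two, Matrix.cons_val_zero, Matrix.cons_val_one]
  rw [sum_comm, boxCorrelation, Complex.re_sum]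
  refine sum_congr rfl fun b _ => ?_
  rw [sum_congr rfl fun a _ => sum_comm, sum_comm, Complex.re_sum]
  refine sum_congr rfl fun b' _ => ?_
  rw [← sum_mul_sum, ← map_sum, Complex.mul_conj', ← Complex.ofReal_pow, Complex.ofReal_re]

lemma boxNormPow_two_eq (Q S : Finset ℤ) (f : ℤ → ℂ) :
    boxNormPow 2 (fun _ => Q) S f =
      (#S : ℝ)⁻¹ * ((#Q : ℝ) ^ 2)⁻¹ ^ 2 * ∑' x, boxCorrelation f Q x := by
  simp only [boxNormPow, re_sum_prod_conjPow_eq_boxCorrelation, prod_const, card_univ,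
    Fintype.card_fin]

lemma pow_le_boxNormPow_of_le_boxNorm {d : ℕ} {Q : Fin d → Finset ℤ} {S : Finset ℤ} {f : ℤ → ℂ}
    {δ : ℝ} (hδ : 0 ≤ δ) (hP : 0 ≤ boxNormPow d Q S f) (h : δ ≤ boxNorm d Q S f) :
    δ ^ 2 ^ d ≤ boxNormPow d Q S f := by
  rw [boxNorm, Real.le_rpow_inv_iff_of_pos hδ hP (by positivity)] at h
  exact_mod_cast h

lemma one_le_of_le_boxNorm_two {M : ℕ} {S : Finset ℤ} {f : ℤ → ℂ} {δ : ℝ} (hδ : 0 < δ)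
    (h : δ ≤ boxNorm 2 (fun _ => Icc 1 (M : ℤ)) S f) : 1 ≤ M := by
  by_contra hM
  rw [boxNorm, boxNormPow_two_eq, show M = 0 by omega] at h
  norm_num at h
  linarith

lemma AddChar.exists_apply_zsmul_eq_exp {G : Type*} [AddCommGroup G] [Finite G]
    (χ : AddChar G ℂ) (g : G) :
    ∃ β : ℝ, ∀ n : ℤ, χ (n • g) = Complex.exp (((2 * Real.pi * β * n : ℝ) : ℂ) * Complex.I) := by
  refine ⟨Complex.arg (χ g) / (2 * Real.pi), fun n => ?_⟩
  have hχ := Complex.norm_mul_exp_arg_mul_I (χ g)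
  rw [AddChar.norm_apply, Complex.ofReal_one, one_mul] at hχ
  conv_lhs => rw [AddChar.map_zsmul_eq_zpow, ← hχ, ← Complex.exp_int_mul]
  congr 1
  push_cast
  field_simp

lemma intCast_injOn_Icc {K : ℕ} {c d : ℤ} (h : d - c < K) :
    Set.InjOn (Int.cast : ℤ → ZMod K) (Icc c d : Set ℤ) := by
  intro x hx y hy hxy
  simp only [coe_Icc, Set.mem_Icc] at hx hy
  rw [ZMod.intCast_eq_intCast_iff_dvd_sub] at hxy
  have := Int.eq_zero_of_abs_lt_dvd hxy (abs_sub_lt_iff.mpr ⟨by omega, by omega⟩)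
  omega

section Transfer

variable {f : ℤ → ℂ} {N K : ℕ} [NeZero K]

lemma apply_val_intCast (hsupp : ∀ x, x ∉ Icc (1 : ℤ) N → f x = 0) {y : ℤ}
    (hy₁ : (N : ℤ) - K < y) (hy₂ : y < K) : f ((y : ZMod K).val) = f y := by
  rw [ZMod.val_intCast]
  rcases lt_or_ge y 0 with hy | hy
  · have hmod : y % K = y + K := by
      rw [Int.emod_eq_add_self_emod]; exact Int.emod_eq_of_lt (by omega) (by omega)
    rw [hmod, hsupp _ (by simp; omega), hsupp _ (by simp; omega)]
  · rw [Int.emod_eq_of_lt hy hy₂]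

lemma sum_apply_val_eq_sum_Icc {R : Type*} [AddCommMonoid R]
    (hsupp : ∀ x, x ∉ Icc (1 : ℤ) N → f x = 0) (hNK : N < K) (g : ZMod K → ℂ → R)
    (hg : ∀ z, g z 0 = 0) :
    ∑ z : ZMod K, g z (f z.val) = ∑ y ∈ Icc (1 : ℤ) N, g y (f y) := by
  have hinj := intCast_injOn_Icc (K := K) (c := 1) (d := N) (by omega)
  rw [← sum_subset (subset_univ ((Icc (1 : ℤ) N).image Int.cast)), sum_image hinj]
  · exact sum_congr rfl fun y hy => by
      rw [mem_Icc] at hy; rw [apply_val_intCast hsupp (by omega) (by omega)]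
  · intro z _ hz
    rw [hsupp _ fun hval => hz (mem_image.mpr ⟨_, hval, by simp⟩), hg]

variable {M : ℕ}

lemma boxCorrelation_eq_zero_of_notMem (hsupp : ∀ x, x ∉ Icc (1 : ℤ) N → f x = 0) (hMN : M ≤ N)
    {x : ℤ} (hx : x ∉ Icc (-2 * (N : ℤ)) N) : boxCorrelation f (Icc 1 (M : ℤ)) x = 0 := by
  rw [mem_Icc] at hx
  refine sum_eq_zero fun b hb => sum_eq_zero fun b' _ => ?_
  rw [sq_eq_zero_iff, norm_eq_zero]
  refine sum_eq_zero fun a ha => ?_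
  rw [mem_Icc] at ha hb
  rw [hsupp _ (by rw [mem_Icc]; omega), zero_mul]

lemma boxCorrelation_intCast (hsupp : ∀ x, x ∉ Icc (1 : ℤ) N → f x = 0) (hMN : M ≤ N)
    (hK : 3 * N < K) {x : ℤ} (hx : x ∈ Icc (-2 * (N : ℤ)) N) :
    boxCorrelation f (Icc 1 (M : ℤ)) x =
      boxCorrelation (fun z : ZMod K => f z.val) ((Icc 1 (M : ℤ)).image Int.cast) x := by
  have hinj := intCast_injOn_Icc (K := K) (c := 1) (d := M) (by omega)
  rw [mem_Icc] at hx
  simp only [boxCorrelation, sum_image hinj]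
  refine sum_congr rfl fun b hb => sum_congr rfl fun b' hb' => ?_
  congr 2
  refine sum_congr rfl fun a ha => ?_
  rw [mem_Icc] at ha hb hb'
  simp only [← Int.cast_add]
  rw [apply_val_intCast hsupp (by omega) (by omega), apply_val_intCast hsupp (by omega) (by omega)]

theorem tsum_boxCorrelation_le (hsupp : ∀ x, x ∉ Icc (1 : ℤ) N → f x = 0) (hMN : M ≤ N)
    (hK : 3 * N < K) :
    ∑' x, boxCorrelation f (Icc 1 (M : ℤ)) x ≤
      ∑ z, boxCorrelation (fun z : ZMod K => f z.val) ((Icc 1 (M : ℤ)).image Int.cast) z := by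
  have hinj := intCast_injOn_Icc (K := K) (c := -2 * (N : ℤ)) (d := N) (by omega)
  rw [tsum_eq_sum fun x hx => boxCorrelation_eq_zero_of_notMem hsupp hMN hx,
    sum_congr rfl fun x hx => boxCorrelation_intCast hsupp hMN hK hx, ← sum_image hinj]
  exact sum_le_univ_sum_of_nonneg fun z => boxCorrelation_nonneg _ _ z

end Transfer

theorem exists_sq_mul_boxNormPow_le (f : ℤ → ℂ) {N M : ℕ} (hM : 1 ≤ M) (hMN : M ≤ N)
    (hf : ∀ x, ‖f x‖ ≤ 1) (hsupp : ∀ x, x ∉ Icc (1 : ℤ) N → f x = 0) :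
    ∃ β : ℝ, (M : ℝ) ^ 2 * boxNormPow 2 (fun _ => Icc 1 (M : ℤ)) (Icc 1 (N : ℤ)) f ≤
      ‖∑ x ∈ Icc (1 : ℤ) N,
          f x * Complex.exp (((2 * Real.pi * β * x : ℝ) : ℂ) * Complex.I)‖ ^ 2 := by
  set K := 3 * N + 1
  set F : ZMod K → ℂ := fun z => f z.val
  obtain ⟨χ, -, hχ⟩ := exists_max_image univ
    (fun χ : AddChar (ZMod K) ℂ => ‖∑ z, F z * χ z‖ ^ 2) univ_nonempty
  obtain ⟨β, hβ⟩ := χ.exists_apply_zsmul_eq_exp 1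
  refine ⟨β, ?_⟩
  have hcoeff : ∑ z, F z * χ z =
      ∑ x ∈ Icc (1 : ℤ) N, f x * Complex.exp (((2 * Real.pi * β * x : ℝ) : ℂ) * Complex.I) := by
    rw [sum_apply_val_eq_sum_Icc hsupp (by omega) (fun z w => w * χ z) (fun _ => zero_mul _)]
    simp only [← hβ, zsmul_one]
  have hl2 : ∑ z, ‖F z‖ ^ 2 ≤ N := by
    rw [sum_apply_val_eq_sum_Icc hsupp (by omega) (fun _ w => ‖w‖ ^ 2) (by simp)]
    calc ∑ x ∈ Icc (1 : ℤ) N, ‖f x‖ ^ 2 ≤ ∑ x ∈ Icc (1 : ℤ) N, 1 :=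
          sum_le_sum fun x _ => pow_le_one₀ (norm_nonneg _) (hf x)
      _ = N := by simp
  have hcard : #((Icc 1 (M : ℤ)).image (Int.cast : ℤ → ZMod K)) ≤ M :=
    card_image_le.trans (by simp)
  have hS := (tsum_boxCorrelation_le hsupp hMN (by omega)).trans
    (sum_boxCorrelation_le F _ fun χ' => hχ χ' (mem_univ _))
  rw [boxNormPow_two_eq, ← hcoeff]
  have hN : (1 : ℝ) ≤ N := by exact_mod_cast hM.trans hMN
  calc (M : ℝ) ^ 2 * ((#(Icc 1 (N : ℤ)) : ℝ)⁻¹ * ((#(Icc 1 (M : ℤ)) : ℝ) ^ 2)⁻¹ ^ 2 *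
        ∑' x, boxCorrelation f (Icc 1 (M : ℤ)) x)
      ≤ (M : ℝ) ^ 2 * ((N : ℝ)⁻¹ * ((M : ℝ) ^ 2)⁻¹ ^ 2 *
        ((M : ℝ) ^ 2 * ‖∑ z, F z * χ z‖ ^ 2 * N)) := by
        simp only [Int.card_Icc, add_sub_cancel_right, Int.toNat_natCast]
        gcongr
        exact hS.trans (by gcongr)
    _ = ‖∑ z, F z * χ z‖ ^ 2 := by field_simp

theorem exists_sq_mul_le_norm_sum_of_le_boxNorm (f : ℤ → ℂ) {N M : ℕ} (hMN : M ≤ N)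
    (hf : ∀ x, ‖f x‖ ≤ 1) (hsupp : ∀ x, x ∉ Icc (1 : ℤ) N → f x = 0) {δ : ℝ} (hδ : 0 < δ)
    (h : δ ≤ boxNorm 2 (fun _ => Icc 1 (M : ℤ)) (Icc 1 (N : ℤ)) f) :
    ∃ β : ℝ, δ ^ 2 * M ≤
      ‖∑ x ∈ Icc (1 : ℤ) N, f x * Complex.exp (((2 * Real.pi * β * x : ℝ) : ℂ) * Complex.I)‖ := by
  have hP : 0 ≤ boxNormPow 2 (fun _ => Icc 1 (M : ℤ)) (Icc 1 (N : ℤ)) f := by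
    rw [boxNormPow_two_eq]
    exact mul_nonneg (by positivity) (tsum_nonneg (boxCorrelation_nonneg f _))
  obtain ⟨β, hβ⟩ := exists_sq_mul_boxNormPow_le f (one_le_of_le_boxNorm_two hδ h) hMN hf hsupp
  refine ⟨β, (pow_le_pow_iff_left₀ (by positivity) (norm_nonneg _) two_ne_zero).1 ?_⟩
  calc (δ ^ 2 * M) ^ 2 = (M : ℝ) ^ 2 * δ ^ 2 ^ 2 := by ring
    _ ≤ _ := by gcongr; exact pow_le_boxNormPow_of_le_boxNorm hδ.le hP h
    _ ≤ _ := hβ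

lemma mul_floor_lt_two_mul_floor_mul {a L : ℝ} (ha : 0 ≤ a) (h : 1 ≤ ⌊a * L⌋) :
    a * ⌊L⌋ < 2 * ⌊a * L⌋ := by
  have hfloor := Int.lt_floor_add_one (a * L)
  have hle : (1 : ℝ) ≤ ⌊a * L⌋ := by exact_mod_cast h
  nlinarith [Int.floor_le L]

/-- Inverse theorem for the localized `U²`-norm `U²_{[δ'L]}([L])`: a `1`-bounded function
supported on `[L]` with large localized `U²`-norm correlates with a character `e(βx)`. -/
theorem stmt12 :
    ∃ c C : ℝ, 0 < c ∧ 0 < C ∧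
      ∀ (L δ δ' : ℝ) (f : ℤ → ℂ), 0 < L → 0 < δ → δ ≤ 1 → 0 < δ' → δ' ≤ 1 →
        (∀ x, ‖f x‖ ≤ 1) → (∀ x, x ∉ Finset.Icc (1 : ℤ) ⌊L⌋ → f x = 0) →
        δ ≤ boxNorm 2 (fun _ => Finset.Icc (1 : ℤ) ⌊δ' * L⌋) (Finset.Icc (1 : ℤ) ⌊L⌋) f →
        ∃ β : ℝ, c * (δ * δ') ^ C ≤
          ‖(∑ x ∈ Finset.Icc (1 : ℤ) ⌊L⌋,
              f x * Complex.exp (((2 * Real.pi * β * (x : ℝ) : ℝ) : ℂ) * Complex.I)) /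
            ((Finset.Icc (1 : ℤ) ⌊L⌋).card : ℂ)‖ := by
  refine ⟨1 / 2, 2, by norm_num, by norm_num, ?_⟩
  intro L δ δ' f hL hδ hδ1 hδ' hδ'1 hf hsupp hbox
  obtain ⟨N, hN⟩ := Int.eq_ofNat_of_zero_le (Int.floor_nonneg.2 hL.le)
  obtain ⟨M, hM⟩ := Int.eq_ofNat_of_zero_le (Int.floor_nonneg.2 (mul_pos hδ' hL).le)
  have hMN : M ≤ N := by
    have := Int.floor_mono (mul_le_of_le_one_left hL.le hδ'1)
    omega
  have hM1 : 1 ≤ M := one_le_of_le_boxNorm_two hδ (hM ▸ hbox)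
  have hδ'N : δ' * N < 2 * M := by
    have := mul_floor_lt_two_mul_floor_mul hδ'.le (L := L) (by omega)
    rwa [hN, hM, Int.cast_natCast, Int.cast_natCast] at this
  rw [hN] at hsupp hbox ⊢
  rw [hM] at hbox
  obtain ⟨β, hβ⟩ := exists_sq_mul_le_norm_sum_of_le_boxNorm f hMN hf hsupp hδ hbox
  refine ⟨β, ?_⟩
  rw [norm_div, Int.card_Icc, add_sub_cancel_right, Int.toNat_natCast, Complex.norm_natCast,
    Real.rpow_two, le_div_iff₀ (by exact_mod_cast hM1.trans hMN)]
  refine le_trans ?_ hβ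
  have hδ'sq : δ' ^ 2 * N ≤ δ' * N := by gcongr; nlinarith
  nlinarith [pow_pos hδ 2]
end

section
/- Density increment implies the final bound: Suppose that for constants c₁, c₂, c₃, K > 0 depending only on the polynomials, any A ⊂ [N] of density α with no nontrivial progressions yields (when N ≥ K(q/α)^{c₃}) a sub-progression of length N' ≥ K^{-1} N^{1/D}(α/q)^{c₃} on which the density increases to at least α + c₁α^{c₂}, with the new modulus q' ≤ K α^{−c₃} q^{c₃}. Then iterating, any A ⊂ [N] with no nontrivial progressions x, x+P₁(y), …, x+P_m(y) (P_i distinct degrees, zero constant term) satisfies |A| ≪ N/(log log N)^{c} for some c > 0 depending only on P₁,…,P_m. -/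
set_option maxHeartbeats 1000000

private lemma aux_pow_mul (x y a b c : ℝ) (hx : 1 ≤ x) (hy : 1 ≤ y) (ha : 0 ≤ a)
    (hb : 0 ≤ b) (hac : a ≤ c) (hbc : b ≤ c) : x ^ a * y ^ b ≤ (x * y) ^ c := by
  have hx0 : (0:ℝ) ≤ x := by linarith
  have hy0 : (0:ℝ) ≤ y := by linarith
  rw [Real.mul_rpow hx0 hy0]
  exact mul_le_mul (Real.rpow_le_rpow_of_exponent_le hx hac)
    (Real.rpow_le_rpow_of_exponent_le hy hbc) (Real.rpow_nonneg hy0 b)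
    (Real.rpow_nonneg hx0 c)

/-- Density increment implies the final bound: if every progression-free set of density `α`
in `[N]` (with respect to the modulus-`q` rescaled polynomials, abstracted here by the
predicate `Free q ·`) admits a density increment of size `c₁α^{c₂}` on a rescaled copy of
`[N']` with `N' ≥ K⁻¹N^{1/D}(α/q)^{c₃}` and new modulus `q·q'` with
`q' ≤ Kα^{−c₃}q^{c₃}` (valid once `N ≥ K(q/α)^{c₃}`), then iterating yields
`|A| ≪ N/(log log N)^c` for every progression-free `A ⊆ [N]`. -/
theorem stmt18 (D : ℕ) (hD : 2 ≤ D) (Free : ℕ → Finset ℤ → Prop)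
    (c₁ c₂ c₃ K : ℝ) (hc₁ : 0 < c₁) (hc₂ : 0 < c₂) (hc₃ : 0 < c₃) (hK : 1 ≤ K)
    (increment : ∀ (N q : ℕ) (A : Finset ℤ), 0 < N → 0 < q →
      A ⊆ Finset.Icc 1 (N : ℤ) → Free q A → A.Nonempty →
      K * ((q : ℝ) / ((A.card : ℝ) / N)) ^ c₃ ≤ N →
      ∃ (N' q' : ℕ) (A' : Finset ℤ), 0 < N' ∧ 0 < q' ∧
        (q' : ℝ) ≤ K * ((A.card : ℝ) / N)⁻¹ ^ c₃ * (q : ℝ) ^ c₃ ∧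
        K⁻¹ * (N : ℝ) ^ ((1 : ℝ) / D) * (((A.card : ℝ) / N) / q) ^ c₃ ≤ N' ∧
        A' ⊆ Finset.Icc 1 (N' : ℤ) ∧ Free (q * q') A' ∧
        (A.card : ℝ) / N + c₁ * ((A.card : ℝ) / N) ^ c₂ ≤ (A'.card : ℝ) / N') :
    ∃ c C : ℝ, 0 < c ∧ 0 < C ∧
      ∀ (N : ℕ) (A : Finset ℤ), 3 ≤ N → A ⊆ Finset.Icc 1 (N : ℤ) → Free 1 A →
        (A.card : ℝ) ≤ C * N / Real.log (Real.log N) ^ c := by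
  classical
  have hKpos : (0:ℝ) < K := lt_of_lt_of_le one_pos hK
  have hD2 : (2:ℝ) ≤ (D:ℝ) := by exact_mod_cast hD
  set L : ℝ := (D:ℝ) * (2 + c₃) + 2 with hLdef
  clear_value L
  have hL6 : (6:ℝ) ≤ L := by rw [hLdef]; nlinarith
  have hL1 : (1:ℝ) ≤ L := by linarith
  have hLpos : (0:ℝ) < L := by linarith
  -- key iteration claim
  have key : ∀ (α₀ : ℝ), 0 < α₀ → α₀ ≤ 1 → ∀ (k : ℕ), ∀ (N q : ℕ) (A : Finset ℤ),
      0 < N → 0 < q → A ⊆ Finset.Icc 1 (N:ℤ) → Free q A → A.Nonempty →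
      α₀ ≤ (A.card:ℝ)/N → 1 - (k:ℝ) * (c₁ * α₀ ^ c₂) < (A.card:ℝ)/N →
      (N : ℝ) ≤ (K * α₀ ^ (-c₃) * q) ^ (L ^ k - 1) := by
    intro α₀ hα0 hα1 k
    have hα0c : (1:ℝ) ≤ α₀ ^ (-c₃) :=
      Real.one_le_rpow_of_pos_of_le_one_of_nonpos hα0 hα1 (by linarith)
    have hB1 : (1:ℝ) ≤ K * α₀ ^ (-c₃) := by nlinarith
    have hBpos : (0:ℝ) < K * α₀ ^ (-c₃) := lt_of_lt_of_le one_pos hB1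
    induction k with
    | zero =>
      intro N q A hN hq hA hF hne hlb hub
      exfalso
      have hcard : A.card ≤ N := by
        have h := Finset.card_le_card hA
        simpa using h
      have hNpos : (0:ℝ) < N := by exact_mod_cast hN
      have : (A.card:ℝ)/N ≤ 1 := by
        rw [div_le_one hNpos]; exact_mod_cast hcard
      simp only [Nat.cast_zero, zero_mul, sub_zero] at hub
      linarith
    | succ k ih =>
      intro N q A hN hq hA hF hne hlb hub
      set B : ℝ := K * α₀ ^ (-c₃) with hBdef
      set α : ℝ := (A.card:ℝ)/N with hαdef
      have hNpos : (0:ℝ) < N := by exact_mod_cast hN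
      have hqpos : (0:ℝ) < q := by exact_mod_cast hq
      have hq1 : (1:ℝ) ≤ q := by exact_mod_cast hq
      have hαpos : 0 < α := by
        apply div_pos _ hNpos
        exact_mod_cast Finset.card_pos.mpr hne
      have hα0α : α₀ ≤ α := hlb
      have hBq1 : (1:ℝ) ≤ B * q := by nlinarith
      have hBqpos : (0:ℝ) < B * q := lt_of_lt_of_le one_pos hBq1
      have hLk1 : (1:ℝ) ≤ L ^ k := one_le_pow₀ hL1
      have hLsk1 : (1:ℝ) ≤ L ^ (k+1) := one_le_pow₀ hL1
      have hLL : L ≤ L ^ (k+1) := le_self_pow₀ hL1 (Nat.succ_ne_zero k)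
      -- bound K * (q/α)^c₃ ≤ B * q^c₃
      have h1 : K * ((q:ℝ)/α) ^ c₃ ≤ B * (q:ℝ) ^ c₃ := by
        have hda : (q:ℝ)/α ≤ (q:ℝ)/α₀ := by gcongr
        have hmono : ((q:ℝ)/α) ^ c₃ ≤ ((q:ℝ)/α₀) ^ c₃ :=
          Real.rpow_le_rpow (div_nonneg (le_of_lt hqpos) (le_of_lt hαpos)) hda (le_of_lt hc₃)
        have heq : ((q:ℝ)/α₀) ^ c₃ = (q:ℝ) ^ c₃ * α₀ ^ (-c₃) := by
          rw [Real.div_rpow (le_of_lt hqpos) (le_of_lt hα0), Real.rpow_neg (le_of_lt hα0),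
            div_eq_mul_inv]
        calc K * ((q:ℝ)/α) ^ c₃ ≤ K * ((q:ℝ)/α₀) ^ c₃ :=
              mul_le_mul_of_nonneg_left hmono (le_of_lt hKpos)
          _ = B * (q:ℝ) ^ c₃ := by rw [heq, hBdef]; ring
      have hBqc : B * (q:ℝ) ^ c₃ ≤ (B*q) ^ (1 + c₃) := by
        have h := aux_pow_mul B (q:ℝ) 1 c₃ (1+c₃) hB1 hq1 zero_le_one (le_of_lt hc₃)
          (by linarith) (by linarith)
        rwa [Real.rpow_one] at h
      by_cases hcond : K * ((q:ℝ)/α) ^ c₃ ≤ N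
      · -- apply the increment
        obtain ⟨N', q', A', hN', hq', hq'le, hN'ge, hA', hF', hdens⟩ :=
          increment N q A hN hq hA hF hne hcond
        have hN'pos : (0:ℝ) < N' := by exact_mod_cast hN'
        have hδ : c₁ * α₀ ^ c₂ ≤ c₁ * α ^ c₂ := by
          apply mul_le_mul_of_nonneg_left _ (le_of_lt hc₁)
          exact Real.rpow_le_rpow (le_of_lt hα0) hα0α (le_of_lt hc₂)
        have hdens' : α + c₁ * α₀ ^ c₂ ≤ (A'.card:ℝ)/N' := by
          refine le_trans ?_ hdens; linarith
        have hδpos : 0 < c₁ * α₀ ^ c₂ := mul_pos hc₁ (Real.rpow_pos_of_pos hα0 _)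
        have hne' : A'.Nonempty := by
          have hpos : (0:ℝ) < (A'.card:ℝ)/N' := lt_of_lt_of_le (by linarith) hdens'
          have h := mul_pos hpos hN'pos
          rw [div_mul_cancel₀ _ (ne_of_gt hN'pos)] at h
          exact Finset.card_pos.mp (by exact_mod_cast h)
        have hIH := ih N' (q*q') A' hN' (Nat.mul_pos hq hq') hA' hF' hne'
          (by linarith) (by push_cast at hub ⊢; linarith)
        -- bound on new modulus
        have hq'B : (q':ℝ) ≤ B * (q:ℝ) ^ c₃ := by
          have hinv : α⁻¹ ^ c₃ ≤ α₀ ^ (-c₃) := by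
            rw [Real.rpow_neg (le_of_lt hα0), ← Real.inv_rpow (le_of_lt hα0)]
            refine Real.rpow_le_rpow (inv_nonneg.mpr (le_of_lt hαpos)) ?_ (le_of_lt hc₃)
            exact inv_anti₀ hα0 hα0α
          calc (q':ℝ) ≤ K * α⁻¹ ^ c₃ * (q:ℝ) ^ c₃ := hq'le
            _ ≤ B * (q:ℝ) ^ c₃ := by
                have h : K * α⁻¹ ^ c₃ ≤ B :=
                  by rw [hBdef]; exact mul_le_mul_of_nonneg_left hinv (le_of_lt hKpos)
                exact mul_le_mul_of_nonneg_right h (Real.rpow_nonneg (le_of_lt hqpos) _)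
        have hBqq' : B * ((q*q' : ℕ):ℝ) ≤ (B*q) ^ ((2:ℝ) + c₃) := by
          have h2 : B * ((q*q' : ℕ):ℝ) ≤ (B * q) * (B * (q:ℝ) ^ c₃) := by
            push_cast
            calc B * ((q:ℝ) * q') = (B * q) * q' := by ring
              _ ≤ (B * q) * (B * (q:ℝ) ^ c₃) :=
                  mul_le_mul_of_nonneg_left hq'B (le_of_lt hBqpos)
          refine le_trans h2 ?_
          have h3 : (B*q) * (B * (q:ℝ) ^ c₃) ≤ (B*q) ^ (1:ℝ) * (B*q) ^ (1+c₃) := by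
            rw [Real.rpow_one]
            exact mul_le_mul_of_nonneg_left hBqc (le_of_lt hBqpos)
          refine le_trans h3 ?_
          rw [← Real.rpow_add hBqpos]
          apply Real.rpow_le_rpow_of_exponent_le hBq1
          linarith
        -- bound on N'
        have hN'le : (N':ℝ) ≤ (B*q) ^ (((2:ℝ)+c₃) * (L ^ k - 1)) := by
          have hstep : (N':ℝ) ≤ ((B*q) ^ ((2:ℝ)+c₃)) ^ (L ^ k - 1) := by
            refine le_trans hIH ?_
            exact Real.rpow_le_rpow (by positivity) hBqq' (by linarith)
          rwa [← Real.rpow_mul (le_of_lt hBqpos)] at hstep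
        -- bound on N^(1/D)
        have ht : (0:ℝ) < (α/(q:ℝ)) ^ c₃ := Real.rpow_pos_of_pos (div_pos hαpos hqpos) _
        have h2a : (N:ℝ) ^ ((1:ℝ)/D) * (α/(q:ℝ)) ^ c₃ ≤ K * N' := by
          have h := mul_le_mul_of_nonneg_left hN'ge (le_of_lt hKpos)
          calc (N:ℝ) ^ ((1:ℝ)/D) * (α/(q:ℝ)) ^ c₃
              = K * (K⁻¹ * (N:ℝ) ^ ((1:ℝ)/D) * (α/(q:ℝ)) ^ c₃) := by
                rw [show K * (K⁻¹ * (N:ℝ) ^ ((1:ℝ)/D) * (α/(q:ℝ)) ^ c₃)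
                    = (K * K⁻¹) * ((N:ℝ) ^ ((1:ℝ)/D) * (α/(q:ℝ)) ^ c₃) from by ring,
                  mul_inv_cancel₀ (ne_of_gt hKpos), one_mul]
            _ ≤ K * N' := h
        have h2b : (N:ℝ) ^ ((1:ℝ)/D) ≤ K * N' * ((q:ℝ)/α) ^ c₃ := by
          have hqa : ((q:ℝ)/α) ^ c₃ = ((α/(q:ℝ)) ^ c₃)⁻¹ := by
            rw [← Real.inv_rpow (div_nonneg (le_of_lt hαpos) (le_of_lt hqpos)), inv_div]
          rw [hqa, ← div_eq_mul_inv, le_div_iff₀ ht]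
          exact h2a
        have h2c : (N:ℝ) ^ ((1:ℝ)/D) ≤ (B * (q:ℝ) ^ c₃) * N' := by
          calc (N:ℝ) ^ ((1:ℝ)/D) ≤ K * N' * ((q:ℝ)/α) ^ c₃ := h2b
            _ = (K * ((q:ℝ)/α) ^ c₃) * N' := by ring
            _ ≤ (B * (q:ℝ) ^ c₃) * N' :=
                mul_le_mul_of_nonneg_right h1 (le_of_lt hN'pos)
        have h5 : (N:ℝ) ^ ((1:ℝ)/D) ≤ (B*q) ^ ((1+c₃) + ((2:ℝ)+c₃) * (L ^ k - 1)) := by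
          calc (N:ℝ) ^ ((1:ℝ)/D) ≤ (B * (q:ℝ) ^ c₃) * N' := h2c
            _ ≤ (B*q) ^ (1+c₃) * (B*q) ^ (((2:ℝ)+c₃) * (L ^ k - 1)) := by
                apply mul_le_mul hBqc hN'le (le_of_lt hN'pos) (by positivity)
            _ = (B*q) ^ ((1+c₃) + ((2:ℝ)+c₃) * (L ^ k - 1)) := by
                rw [← Real.rpow_add hBqpos]
        -- raise to the D-th power
        have hDne : ((D:ℝ)) ≠ 0 := by positivity
        have h6 : (N:ℝ) ≤ (B*q) ^ (((1+c₃) + ((2:ℝ)+c₃) * (L ^ k - 1)) * D) := by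
          have h := Real.rpow_le_rpow (Real.rpow_nonneg (le_of_lt hNpos) _) h5
            (Nat.cast_nonneg D)
          rwa [← Real.rpow_mul (le_of_lt hNpos), one_div,
            inv_mul_cancel₀ hDne, Real.rpow_one,
            ← Real.rpow_mul (le_of_lt hBqpos)] at h
        refine le_trans h6 (Real.rpow_le_rpow_of_exponent_le hBq1 ?_)
        have hLP : L ^ (k+1) = ((D:ℝ) * (2+c₃) + 2) * L ^ k := by
          rw [pow_succ, hLdef]; ring
        rw [hLP]
        linarith [hLk1, hD2]
      · -- the condition fails : N is small
        rw [not_le] at hcond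
        have h := le_trans (le_of_lt (lt_of_lt_of_le hcond h1)) hBqc
        refine le_trans h ?_
        apply Real.rpow_le_rpow_of_exponent_le hBq1
        have h2 : (2:ℝ) + c₃ ≤ L := by rw [hLdef]; nlinarith
        linarith
  -- now deduce the final bound
  have hlogL : 0 < Real.log L := Real.log_pos (by linarith)
  have hlogK : 0 ≤ Real.log K := Real.log_nonneg hK
  set c₄ : ℝ := max c₂ 1 with hc₄def
  have hc₄1 : (1:ℝ) ≤ c₄ := le_max_right _ _
  clear_value c₄
  have hc₄pos : (0:ℝ) < c₄ := lt_of_lt_of_le one_pos hc₄1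
  set C₂ : ℝ := c₁⁻¹ * Real.log L + Real.log L + Real.log K + c₃ with hC₂def
  have hC₂pos : 0 < C₂ := by
    have : 0 < c₁⁻¹ * Real.log L := mul_pos (inv_pos.mpr hc₁) hlogL
    rw [hC₂def]; linarith
  clear_value C₂
  refine ⟨c₄⁻¹, C₂ ^ c₄⁻¹, inv_pos.mpr hc₄pos, Real.rpow_pos_of_pos hC₂pos _, ?_⟩
  intro N A hN3 hA hF
  have hNpos : 0 < N := by omega
  have hNR : (0:ℝ) < N := by exact_mod_cast hNpos
  have hN3R : (3:ℝ) ≤ N := by exact_mod_cast hN3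
  have hlogN1 : 1 < Real.log N := by
    rw [Real.lt_log_iff_exp_lt hNR]
    have := Real.exp_one_lt_d9
    linarith
  have hllN : 0 < Real.log (Real.log N) := Real.log_pos hlogN1
  have hllNc : (0:ℝ) < Real.log (Real.log N) ^ (c₄⁻¹ : ℝ) := Real.rpow_pos_of_pos hllN _
  rcases A.eq_empty_or_nonempty with hAe | hne
  · subst hAe
    simp only [Finset.card_empty, Nat.cast_zero]
    positivity
  -- nonempty case
  set α : ℝ := (A.card:ℝ)/N with hαdef
  have hαpos : 0 < α := by
    apply div_pos _ hNR
    exact_mod_cast Finset.card_pos.mpr hne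
  have hcard : A.card ≤ N := by
    have h := Finset.card_le_card hA
    simpa using h
  have hα1 : α ≤ 1 := by
    rw [hαdef, div_le_one hNR]; exact_mod_cast hcard
  clear_value α
  set δ : ℝ := c₁ * α ^ c₂ with hδdef
  have hδpos : 0 < δ := mul_pos hc₁ (Real.rpow_pos_of_pos hαpos _)
  clear_value δ
  set k : ℕ := ⌈δ⁻¹⌉₊ with hkdef
  have hkδ : 1 ≤ (k:ℝ) * δ := by
    have h := Nat.le_ceil δ⁻¹
    have := mul_le_mul_of_nonneg_right h (le_of_lt hδpos)
    rwa [inv_mul_cancel₀ (ne_of_gt hδpos)] at this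
  clear_value k
  have hkδ' : 1 ≤ (k:ℝ) * (c₁ * α ^ c₂) := by rw [← hδdef]; exact hkδ
  have hkey := key α hαpos hα1 k N 1 A hNpos one_pos hA hF hne (le_of_eq hαdef) (by linarith)
  rw [Nat.cast_one, mul_one] at hkey
  have hα0c : (1:ℝ) ≤ α ^ (-c₃) :=
    Real.one_le_rpow_of_pos_of_le_one_of_nonpos hαpos hα1 (by linarith)
  set B : ℝ := K * α ^ (-c₃) with hBdef
  have hB1 : (1:ℝ) ≤ B := le_trans hK (le_mul_of_one_le_right (le_of_lt hKpos) hα0c)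
  clear_value B
  have hBpos : (0:ℝ) < B := lt_of_lt_of_le one_pos hB1
  have hNle : (N:ℝ) ≤ B ^ ((L ^ k : ℝ)) := by
    refine le_trans hkey (Real.rpow_le_rpow_of_exponent_le hB1 (by linarith))
  have hlogN : Real.log N ≤ L ^ k * Real.log B := by
    have h := Real.log_le_log hNR hNle
    rwa [Real.log_rpow hBpos] at h
  have hLkpos : (0:ℝ) < L ^ k := pow_pos hLpos k
  have hlogB : 0 < Real.log B := by
    by_contra hcon
    push_neg at hcon
    have h2 : L ^ k * Real.log B ≤ L ^ k * 0 :=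
      mul_le_mul_of_nonneg_left hcon (le_of_lt hLkpos)
    rw [mul_zero] at h2
    linarith
  have hll1 : Real.log (Real.log N) ≤ (k:ℝ) * Real.log L + Real.log (Real.log B) := by
    have h := Real.log_le_log (by linarith : (0:ℝ) < Real.log N) hlogN
    rwa [Real.log_mul (ne_of_gt hLkpos) (ne_of_gt hlogB), Real.log_pow] at h
  have hllB : Real.log (Real.log B) ≤ Real.log K + c₃ * α⁻¹ := by
    have h1 : Real.log (Real.log B) ≤ Real.log B := by
      have := Real.log_le_sub_one_of_pos hlogB
      linarith
    have h2 : Real.log B = Real.log K + c₃ * (-Real.log α) := by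
      rw [hBdef, Real.log_mul (ne_of_gt hKpos) (ne_of_gt (Real.rpow_pos_of_pos hαpos _)),
        Real.log_rpow hαpos]
      ring
    have h3 : -Real.log α ≤ α⁻¹ := by
      rw [← Real.log_inv]
      have := Real.log_le_sub_one_of_pos (inv_pos.mpr hαpos)
      linarith
    have h4 : c₃ * (-Real.log α) ≤ c₃ * α⁻¹ := mul_le_mul_of_nonneg_left h3 (le_of_lt hc₃)
    linarith
  have hkle : (k:ℝ) ≤ δ⁻¹ + 1 := by
    rw [hkdef]
    exact le_of_lt (Nat.ceil_lt_add_one (by positivity))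
  have hδinv : δ⁻¹ = c₁⁻¹ * α ^ (-c₂) := by
    rw [hδdef, mul_inv, Real.rpow_neg (le_of_lt hαpos)]
  -- monotonicity in the exponent c₄
  have hX1 : (1:ℝ) ≤ α ^ (-c₄) :=
    Real.one_le_rpow_of_pos_of_le_one_of_nonpos hαpos hα1 (by linarith)
  have hXpos : (0:ℝ) < α ^ (-c₄) := lt_of_lt_of_le one_pos hX1
  have hm2 : α ^ (-c₂) ≤ α ^ (-c₄) :=
    Real.rpow_le_rpow_of_exponent_ge hαpos hα1 (by have := le_max_left c₂ (1:ℝ); rw [hc₄def]; linarith)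
  have hm3 : α⁻¹ ≤ α ^ (-c₄) := by
    rw [show α⁻¹ = α ^ (-(1:ℝ)) by rw [Real.rpow_neg_one]]
    exact Real.rpow_le_rpow_of_exponent_ge hαpos hα1 (by linarith)
  have hchain : Real.log (Real.log N) ≤ C₂ * α ^ (-c₄) := by
    have t0 : Real.log (Real.log N) ≤ (δ⁻¹ + 1) * Real.log L + Real.log K + c₃ * α⁻¹ := by
      have hkL : (k:ℝ) * Real.log L ≤ (δ⁻¹ + 1) * Real.log L :=
        mul_le_mul_of_nonneg_right hkle (le_of_lt hlogL)
      linarith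
    rw [hδinv] at t0
    have t1 : c₁⁻¹ * α ^ (-c₂) * Real.log L ≤ (c₁⁻¹ * Real.log L) * α ^ (-c₄) := by
      have : c₁⁻¹ * α ^ (-c₂) * Real.log L = (c₁⁻¹ * Real.log L) * α ^ (-c₂) := by ring
      rw [this]
      exact mul_le_mul_of_nonneg_left hm2 (by positivity)
    have t2 : Real.log L ≤ Real.log L * α ^ (-c₄) :=
      le_mul_of_one_le_right (le_of_lt hlogL) hX1
    have t3 : Real.log K ≤ Real.log K * α ^ (-c₄) :=
      le_mul_of_one_le_right hlogK hX1
    have t4 : c₃ * α⁻¹ ≤ c₃ * α ^ (-c₄) := mul_le_mul_of_nonneg_left hm3 (le_of_lt hc₃)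
    rw [hC₂def]
    linarith [t0, t1, t2, t3, t4]
  have hfin : α ^ c₄ ≤ C₂ / Real.log (Real.log N) := by
    rw [le_div_iff₀ hllN]
    have h := mul_le_mul_of_nonneg_left hchain (Real.rpow_nonneg (le_of_lt hαpos) c₄)
    have hprod : α ^ c₄ * (C₂ * α ^ (-c₄)) = C₂ := by
      rw [show α ^ c₄ * (C₂ * α ^ (-c₄)) = C₂ * (α ^ c₄ * α ^ (-c₄)) from by ring,
        ← Real.rpow_add hαpos]
      simp
    calc α ^ c₄ * Real.log (Real.log N) ≤ α ^ c₄ * (C₂ * α ^ (-c₄)) := h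
      _ = C₂ := hprod
  have hαle : α ≤ C₂ ^ (c₄⁻¹ : ℝ) / Real.log (Real.log N) ^ (c₄⁻¹ : ℝ) := by
    have h := Real.rpow_le_rpow (Real.rpow_nonneg (le_of_lt hαpos) c₄) hfin
      (le_of_lt (inv_pos.mpr hc₄pos))
    rwa [← Real.rpow_mul (le_of_lt hαpos), mul_inv_cancel₀ (ne_of_gt hc₄pos),
      Real.rpow_one, Real.div_rpow (le_of_lt hC₂pos) (le_of_lt hllN)] at h
  calc (A.card:ℝ) = α * N := by rw [hαdef]; field_simp
    _ ≤ (C₂ ^ (c₄⁻¹ : ℝ) / Real.log (Real.log N) ^ (c₄⁻¹ : ℝ)) * N :=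
        mul_le_mul_of_nonneg_right hαle (le_of_lt hNR)
    _ = C₂ ^ (c₄⁻¹ : ℝ) * N / Real.log (Real.log N) ^ (c₄⁻¹ : ℝ) := by ring
end
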